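/- arXiv:1304.4408 — 4 statements merged into one kernel-verified Lean document; each statement's English description precedes it below -/
import Mathlib

section
/- Let μ be any probability measure on the interval [λ, 1] with 0 < λ ≤ 1. Then for every bounded measurable ζ : [λ,1] → ℝ, one has ∫ ζ² log(ζ²/∫ζ²dμ) dμ ≤ 4·(osc ζ)², where osc ζ = sup ζ − inf ζ is the oscillation of ζ over [λ,1]. In other words, the logarithmic Sobolev inequality with oscillation holds with constant ρ = 1/8. -/
/-!
With `I = ∫ ζ² dμ`, the bound `log u ≤ u - 1` at `u = ζ²/I` gives
`ζ² log (ζ²/I) ≤ (ζ² - I) + (ζ² - I)²/I`, and the first term integrates to zero.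
Since `I` is the mean of `ζ²`, some points `a`, `b` of the support satisfy
`|ζ a| ≤ √I ≤ |ζ b|`, so `||ζ| - √I|` is bounded by the oscillation `r` on the support.
Factoring `(ζ² - I)² = (|ζ| - √I)² (|ζ| + √I)² ≤ 2 r² (ζ² + I)` and integrating gives `4 r²`.
-/

open MeasureTheory Real

lemma mul_log_div_le {t I : ℝ} (ht : 0 ≤ t) (hI : 0 < I) :
    t * log (t / I) ≤ t - I + (t - I) ^ 2 / I := by
  rcases ht.eq_or_lt with rfl | ht
  · rw [zero_div, log_zero, mul_zero, zero_sub, neg_sq, sq, mul_div_cancel_right₀ _ hI.ne']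
    simp
  · calc t * log (t / I) ≤ t * (t / I - 1) :=
          mul_le_mul_of_nonneg_left (log_le_sub_one_of_pos (by positivity)) ht.le
      _ = t - I + (t - I) ^ 2 / I := by field_simp; ring

lemma sq_sub_sq_sq_le_of_abs_sub_le {s c r : ℝ} (h : |s - c| ≤ r) :
    (s ^ 2 - c ^ 2) ^ 2 ≤ 2 * r ^ 2 * (s ^ 2 + c ^ 2) := by
  have hminus : (s - c) ^ 2 ≤ r ^ 2 := sq_le_sq' (abs_le.mp h).1 (abs_le.mp h).2
  have hplus : (s + c) ^ 2 ≤ 2 * (s ^ 2 + c ^ 2) := by nlinarith [sq_nonneg (s - c)]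
  calc (s ^ 2 - c ^ 2) ^ 2 = (s - c) ^ 2 * (s + c) ^ 2 := by ring
    _ ≤ r ^ 2 * (2 * (s ^ 2 + c ^ 2)) := mul_le_mul hminus hplus (sq_nonneg _) (sq_nonneg _)
    _ = 2 * r ^ 2 * (s ^ 2 + c ^ 2) := by ring

lemma abs_abs_sub_le_of_abs_le_le_abs {u v w c r : ℝ} (hv : |v| ≤ c) (hw : c ≤ |w|)
    (huv : |u - v| ≤ r) (hwu : |w - u| ≤ r) : |(|u| - c)| ≤ r := by
  have := abs_sub_abs_le_abs_sub u v
  have := abs_sub_abs_le_abs_sub w u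
  rw [abs_sub_le_iff]
  constructor <;> linarith

theorem integral_sq_mul_log_div_le {α : Type*} [MeasurableSpace α] {μ : Measure α}
    [IsProbabilityMeasure μ] {S : Set α} (hS : μ Sᶜ = 0) {f : α → ℝ} {r : ℝ}
    (hr : ∀ x ∈ S, ∀ y ∈ S, |f x - f y| ≤ r) :
    ∫ x, f x ^ 2 * log (f x ^ 2 / ∫ y, f y ^ 2 ∂μ) ∂μ ≤ 4 * r ^ 2 := by
  -- Degenerate cases are settled by junk values: `log (t / 0) = 0`, and a non-integrable
  -- function has integral `0`.
  rcases (integral_nonneg fun x => sq_nonneg (f x) : 0 ≤ ∫ y, f y ^ 2 ∂μ).eq_or_lt with hI | hI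
  · simp only [← hI, div_zero, log_zero, mul_zero, integral_zero]; positivity
  set I := ∫ y, f y ^ 2 ∂μ with hIdef
  by_cases hL : Integrable (fun x => f x ^ 2 * log (f x ^ 2 / I)) μ
  swap
  · rw [integral_undef hL]; positivity
  have hf2 : Integrable (fun x => f x ^ 2) μ := by
    by_contra h
    exact hI.ne' (integral_undef h)
  obtain ⟨a, ha, hfa⟩ := exists_notMem_null_le_integral hf2 hS
  obtain ⟨b, hb, hfb⟩ := exists_notMem_null_integral_le hf2 hS
  rw [Set.notMem_compl_iff] at ha hb
  have hdev : ∀ x ∈ S, (f x ^ 2 - I) ^ 2 ≤ 2 * r ^ 2 * (f x ^ 2 + I) := fun x hx => by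
    have hc := abs_abs_sub_le_of_abs_le_le_abs (abs_le_sqrt hfa)
      ((sqrt_le_sqrt hfb).trans_eq (sqrt_sq_eq_abs _)) (hr x hx a ha) (hr b hb x hx)
    simpa only [← hIdef, sq_abs, sq_sqrt hI.le] using sq_sub_sq_sq_le_of_abs_sub_le hc
  have hcentered : Integrable (fun x => f x ^ 2 - I) μ := hf2.sub (integrable_const I)
  have hspread : Integrable (fun x => 2 * r ^ 2 * (f x ^ 2 + I) / I) μ :=
    ((hf2.add (integrable_const I)).const_mul _).div_const I
  calc ∫ x, f x ^ 2 * log (f x ^ 2 / I) ∂μ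
      ≤ ∫ x, (f x ^ 2 - I + 2 * r ^ 2 * (f x ^ 2 + I) / I) ∂μ := by
        refine integral_mono_ae hL (hcentered.add hspread) ?_
        filter_upwards [measure_eq_zero_iff_ae_notMem.mp hS] with x hx
        rw [Set.notMem_compl_iff] at hx
        calc f x ^ 2 * log (f x ^ 2 / I) ≤ f x ^ 2 - I + (f x ^ 2 - I) ^ 2 / I :=
              mul_log_div_le (sq_nonneg _) hI
          _ ≤ f x ^ 2 - I + 2 * r ^ 2 * (f x ^ 2 + I) / I := by gcongr; exact hdev x hx
    _ = 4 * r ^ 2 := by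
        rw [integral_add hcentered hspread, integral_sub hf2 (integrable_const I), integral_div,
          integral_const_mul, integral_add hf2 (integrable_const I)]
        simp only [integral_const, probReal_univ, one_smul, ← hIdef]
        field_simp
        ring

theorem single_site_LSI_general (lam : ℝ)
    (μ : Measure ℝ) [IsProbabilityMeasure μ] (hsupp : μ (Set.Icc lam 1)ᶜ = 0)
    (ζ : ℝ → ℝ) (hbdd : ∃ M, ∀ x, |ζ x| ≤ M) :
    ∫ x, ζ x ^ 2 * Real.log (ζ x ^ 2 / ∫ y, ζ y ^ 2 ∂μ) ∂μ
      ≤ 4 * (sSup (ζ '' Set.Icc lam 1) - sInf (ζ '' Set.Icc lam 1)) ^ 2 := by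
  obtain ⟨M, hM⟩ := hbdd
  have hbounded : Bornology.IsBounded (ζ '' Set.Icc lam 1) :=
    isBounded_iff_forall_norm_le.mpr ⟨M, Set.forall_mem_image.mpr fun x _ => hM x⟩
  refine integral_sq_mul_log_div_le hsupp fun x hx y hy => ?_
  rw [← Real.dist_eq, ← Real.diam_eq hbounded]
  exact Metric.dist_le_diam_of_mem hbounded (Set.mem_image_of_mem ζ hx) (Set.mem_image_of_mem ζ hy)

/-- Single-site logarithmic Sobolev inequality with oscillation, with constant ρ = 1/8,
i.e. 1/(2ρ) = 4, for an arbitrary probability measure on [λ,1]. -/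
theorem single_site_LSI (lam : ℝ) (hlam : 0 < lam) (hlam1 : lam ≤ 1)
    (μ : Measure ℝ) [IsProbabilityMeasure μ] (hsupp : μ (Set.Icc lam 1)ᶜ = 0)
    (ζ : ℝ → ℝ) (hmeas : Measurable ζ) (hbdd : ∃ M, ∀ x, |ζ x| ≤ M) :
    ∫ x, ζ x ^ 2 * Real.log (ζ x ^ 2 / ∫ y, ζ y ^ 2 ∂μ) ∂μ
      ≤ 4 * (sSup (ζ '' Set.Icc lam 1) - sInf (ζ '' Set.Icc lam 1)) ^ 2 :=
  single_site_LSI_general lam μ hsupp ζ hbdd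
end

section
/- Let ⟨·⟩ be a product probability measure on a countable product of intervals and let f > 0 be a cylinder random variable. Writing ⟨·⟩_{<n} for averaging over the first n−1 coordinates, one has for each n: osc_n √(⟨f⟩_{<n}) ≤ (⟨(osc_n √f)²⟩_{<n})^{1/2}, where osc_n denotes oscillation in the n-th coordinate. -/
open MeasureTheory Real

/-- The oscillation of a random variable `ζ` on the product space in the `n`-th
coordinate, the other coordinates being fixed at the values of `a`; the `n`-th
coordinate ranges over `[lam,1]`. -/
noncomputable def oscAt (lam : ℝ) (ζ : (ℕ → ℝ) → ℝ) (n : ℕ) (a : ℕ → ℝ) : ℝ :=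
  sSup {z | ∃ t : ℕ → ℝ, (∀ m, t m ∈ Set.Icc lam 1) ∧ (∀ m, m ≠ n → t m = a m) ∧ z = ζ t}
    - sInf {z | ∃ t : ℕ → ℝ, (∀ m, t m ∈ Set.Icc lam 1) ∧ (∀ m, m ≠ n → t m = a m) ∧ z = ζ t}

/-- Average over the first `n` coordinates (coordinates `0, …, n-1`) with respect to the
single-site measures `μs`, the remaining coordinates being fixed at the values of `a`. -/
noncomputable def avgBelow (μs : ℕ → Measure ℝ) (n : ℕ) (f : (ℕ → ℝ) → ℝ)
    (a : ℕ → ℝ) : ℝ :=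
  ∫ b : Fin n → ℝ, f (fun k => if h : k < n then b ⟨k, h⟩ else a k)
    ∂(Measure.pi fun i : Fin n => μs i)

/-! For two configurations `t`, `t'` on the same coordinate line through `a`, the numbers
`√⟨f⟩_{<n}(t)` and `√⟨f⟩_{<n}(t')` are the `L²(⟨·⟩_{<n})` norms of `√f(·, t)` and `√f(·, t')`.
By the triangle inequality in `L²` their difference is at most the `L²` norm of
`√f(·, t) - √f(·, t')`, which is pointwise dominated by `osc_n √f`; taking the supremum over `t`
and the infimum over `t'` gives the claim.

The delicate point is that `osc_n √f` is a supremum over a continuum of values, so it need not be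
Borel: its superlevel sets are projections of Borel sets, i.e. analytic sets. Analytic sets are
null-measurable for every finite measure, by approximating a continuous image of `ℕ → ℕ` from
inside by closed sets, so the right-hand side is an honest integral. -/

open Set Filter Topology
open scoped ENNReal

section AnalyticSet

theorem Monotone.exists_measure_iUnion_le_add {X : Type*} [MeasurableSpace X] {μ : Measure X}
    {B : ℕ → Set X} (hB : Monotone B) (hfin : μ (⋃ m, B m) ≠ ∞) {δ : ℝ≥0∞} (hδ : δ ≠ 0) :
    ∃ m, μ (⋃ m, B m) ≤ μ (B m) + δ := by
  have : μ (⋃ m, B m) < ⨆ m, μ (B m) + δ := by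
    rw [← ENNReal.iSup_add, ← hB.measure_iUnion]
    exact ENNReal.lt_add_right hfin hδ
  obtain ⟨m, hm⟩ := lt_iSup_iff.1 this
  exact ⟨m, hm.le⟩

variable {X : Type*} [MetricSpace X]

theorem iInter_closure_image_subset_range {φ : (ℕ → ℕ) → X} (hφ : Continuous φ)
    {A : ℕ → Set (ℕ → ℕ)} {τ : ℕ → ℕ} (hA : ∀ k, ∀ σ ∈ A k, ∀ i < k, σ i ≤ τ i) :
    ⋂ k, closure (φ '' A k) ⊆ range φ := by
  intro x hx
  have hseq : ∀ k : ℕ, ∃ σ ∈ A k, dist (φ σ) x < 1 / (k + 1) := fun k => by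
    obtain ⟨_, ⟨σ, hσ, rfl⟩, hd⟩ :=
      Metric.mem_closure_iff.1 (mem_iInter.1 hx k) _ Nat.one_div_pos_of_nat
    exact ⟨σ, hσ, by rwa [dist_comm]⟩
  choose σ hσA hσx using hseq
  have hφσ : Tendsto (φ ∘ σ) atTop (𝓝 x) :=
    tendsto_iff_dist_tendsto_zero.2 <| squeeze_zero (fun _ => dist_nonneg)
      (fun k => (hσx k).le) tendsto_one_div_add_atTop_nhds_zero_nat
  -- capping at `τ` moves `σ k` into a compact set without changing its first `k` coordinates
  obtain ⟨σ', -, ψ, hψ, hlim⟩ :=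
    (isCompact_univ_pi fun i => (finite_Iic (τ i)).isCompact).tendsto_subseq
      (x := fun k i => min (σ k i) (τ i)) fun k i _ => mem_Iic.2 (min_le_right _ _)
  have hσψ : Tendsto (σ ∘ ψ) atTop (𝓝 σ') := by
    rw [tendsto_pi_nhds] at hlim ⊢
    intro i
    refine (hlim i).congr' ?_
    filter_upwards [hψ.tendsto_atTop.eventually_gt_atTop i] with j hj
    exact min_eq_left (hA _ _ (hσA _) _ hj)
  exact ⟨σ', tendsto_nhds_unique ((hφ.tendsto σ').comp hσψ) (hφσ.comp hψ.tendsto_atTop)⟩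

variable [MeasurableSpace X] [OpensMeasurableSpace X]

theorem exists_isClosed_subset_range_measure_le_add (μ : Measure X) [IsFiniteMeasure μ]
    {φ : (ℕ → ℕ) → X} (hφ : Continuous φ) {ε : ℝ≥0∞} (hε : ε ≠ 0) :
    ∃ F, IsClosed F ∧ F ⊆ range φ ∧ μ (range φ) ≤ μ F + ε := by
  obtain ⟨δ, hδ0, hδε⟩ := ENNReal.exists_pos_sum_of_countable hε ℕ
  have step (A : Set (ℕ → ℕ)) (k : ℕ) :
      ∃ m, μ (φ '' A) ≤ μ (φ '' (A ∩ {σ | σ k ≤ m})) + δ k := by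
    have hunion : ⋃ m, φ '' (A ∩ {σ | σ k ≤ m}) = φ '' A := by
      rw [← image_iUnion, ← inter_iUnion,
        eq_univ_of_forall fun σ => mem_iUnion.2 ⟨σ k, le_refl (σ k)⟩, inter_univ]
    have hmono : Monotone fun m => φ '' (A ∩ {σ | σ k ≤ m}) := fun m m' h =>
      image_mono (inter_subset_inter_right A fun σ (hσ : σ k ≤ m) => hσ.trans h)
    have := hmono.exists_measure_iUnion_le_add (measure_ne_top μ _)
      (ENNReal.coe_ne_zero.2 (hδ0 k).ne')
    rwa [hunion] at this
  choose m hm using step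
  -- `A k` bounds the first `k` coordinates, each bound chosen to lose at most `δ k` of measure
  let A : ℕ → Set (ℕ → ℕ) := fun k => Nat.rec univ (fun k Ak => Ak ∩ {σ | σ k ≤ m Ak k}) k
  have hA_succ (k : ℕ) : A (k + 1) = A k ∩ {σ | σ k ≤ m (A k) k} := rfl
  have hA_le (k : ℕ) : ∀ σ ∈ A k, ∀ i < k, σ i ≤ m (A i) i := by
    induction k with
    | zero => simp
    | succ k ih =>
      rintro σ ⟨hσ, hσk⟩ i hi
      rcases Nat.lt_succ_iff_lt_or_eq.1 hi with hi | rfl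
      exacts [ih σ hσ i hi, hσk]
  have hA_anti : Antitone A := antitone_nat_of_succ_le fun k => inter_subset_left
  have hμA (k : ℕ) : μ (range φ) ≤ μ (φ '' A k) + ∑ j ∈ Finset.range k, (δ j : ℝ≥0∞) := by
    induction k with
    | zero => simp [A, image_univ]
    | succ k ih =>
      rw [Finset.sum_range_succ, ← add_assoc, add_right_comm, hA_succ]
      exact ih.trans (add_le_add_left (hm _ _) _)
  refine ⟨⋂ k, closure (φ '' A k), isClosed_iInter fun _ => isClosed_closure,
    iInter_closure_image_subset_range hφ hA_le, ?_⟩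
  rw [Antitone.measure_iInter (fun k l h => closure_mono (image_mono (hA_anti h)))
    (fun _ => isClosed_closure.nullMeasurableSet) ⟨0, measure_ne_top μ _⟩, ENNReal.iInf_add]
  exact le_iInf fun k => (hμA k).trans (add_le_add (measure_mono subset_closure)
    ((ENNReal.sum_le_tsum _).trans hδε.le))

theorem MeasureTheory.AnalyticSet.nullMeasurableSet {s : Set X} (hs : AnalyticSet s)
    (μ : Measure X) [IsFiniteMeasure μ] : NullMeasurableSet s μ := by
  rw [AnalyticSet] at hs
  obtain rfl | ⟨φ, hφ, rfl⟩ := hs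
  · exact nullMeasurableSet_empty
  choose F hF_closed hF_sub hF_le using fun m : ℕ =>
    exists_isClosed_subset_range_measure_le_add μ hφ (ε := (m : ℝ≥0∞)⁻¹) (by simp)
  have hle : μ (range φ) ≤ μ (⋃ m, F m) := by
    refine ENNReal.le_of_forall_pos_le_add fun ε hε _ => ?_
    obtain ⟨m, hm⟩ := ENNReal.exists_inv_nat_lt (ENNReal.coe_ne_zero.2 hε.ne')
    exact (hF_le m).trans (add_le_add (measure_mono (subset_iUnion F m)) hm.le)
  have hF : MeasurableSet (⋃ m, F m) := .iUnion fun m => (hF_closed m).measurableSet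
  exact hF.nullMeasurableSet.congr
    (ae_eq_of_subset_of_measure_ge (iUnion_subset hF_sub) hle hF.nullMeasurableSet
      (measure_ne_top μ _))

end AnalyticSet

section LpNorm

variable {α : Type*} [MeasurableSpace α] {μ : Measure α} {g h : α → ℝ}

theorem sqrt_integral_sq_eq_norm_toLp (hg : MemLp g 2 μ) :
    √(∫ x, g x ^ 2 ∂μ) = ‖hg.toLp g‖ := by
  rw [Lp.norm_toLp, hg.eLpNorm_eq_integral_rpow_norm two_ne_zero ENNReal.ofNat_ne_top,
    ENNReal.toReal_ofReal (by positivity), Real.sqrt_eq_rpow]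
  simp [Real.norm_eq_abs, sq_abs]

theorem sqrt_integral_sq_sub_le (hg : MemLp g 2 μ) (hh : MemLp h 2 μ) :
    √(∫ x, g x ^ 2 ∂μ) - √(∫ x, h x ^ 2 ∂μ) ≤ √(∫ x, (g x - h x) ^ 2 ∂μ) := by
  rw [sqrt_integral_sq_eq_norm_toLp hg, sqrt_integral_sq_eq_norm_toLp hh,
    show (fun x => (g x - h x) ^ 2) = fun x => (g - h) x ^ 2 from rfl,
    sqrt_integral_sq_eq_norm_toLp (hg.sub hh), MemLp.toLp_sub]
  exact norm_sub_norm_le _ _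

end LpNorm

section SupMeasurability

variable {β γ : Type*} [MetricSpace β] [PolishSpace β] [MeasurableSpace β] [BorelSpace β]
  [MeasurableSpace γ] [StandardBorelSpace γ] (μ : Measure β) [IsFiniteMeasure μ]
  {G : β → γ → ℝ} {K : Set γ}

theorem nullMeasurable_sSup_image (hG : Measurable (Function.uncurry G)) (hK : MeasurableSet K)
    (hK_ne : K.Nonempty) (hbdd : ∀ b, BddAbove (G b '' K)) :
    NullMeasurable (fun b => sSup (G b '' K)) μ := by
  refine measurable_of_Ioi fun c => (?_ : NullMeasurableSet {b | c < sSup (G b '' K)} μ)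
  have hproj : {b | c < sSup (G b '' K)} =
      Prod.fst '' {p : β × γ | p.2 ∈ K ∧ c < Function.uncurry G p} := by
    ext b
    simp [lt_csSup_iff (hbdd b) (hK_ne.image _)]
  rw [hproj]
  exact (((measurable_snd hK).inter (measurableSet_lt measurable_const hG)).analyticSet_image
    measurable_fst).nullMeasurableSet μ

theorem nullMeasurable_sInf_image (hG : Measurable (Function.uncurry G)) (hK : MeasurableSet K)
    (hK_ne : K.Nonempty) (hbdd : ∀ b, BddBelow (G b '' K)) :
    NullMeasurable (fun b => sInf (G b '' K)) μ := by
  have hneg := nullMeasurable_sSup_image μ (G := fun b x => -G b x) hG.neg hK hK_ne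
    fun b => by simpa [← image_neg_eq_neg, image_image] using (hbdd b).neg
  have hInf : (fun b => sInf (G b '' K)) = -fun b => sSup ((fun x => -G b x) '' K) := by
    ext b
    simp [Real.sInf_def, ← image_neg_eq_neg, image_image]
  rw [hInf]
  exact Measurable.neg hneg

end SupMeasurability

theorem sSup_sub_sInf_le_of_forall_sub_le {S : Set ℝ} {C : ℝ} (hC : 0 ≤ C)
    (h : ∀ x ∈ S, ∀ y ∈ S, x - y ≤ C) : sSup S - sInf S ≤ C := by
  rcases S.eq_empty_or_nonempty with rfl | hS
  · simpa using hC
  rw [sub_le_iff_le_add]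
  refine csSup_le hS fun x hx => ?_
  rw [← sub_le_iff_le_add']
  exact le_csInf hS fun y hy => by linarith [h x hx y hy]

section AbsBounded

variable {δ : Type*} {g : δ → ℝ} {C : ℝ} (hg : ∀ x, |g x| ≤ C) (s : Set δ)
include hg

theorem bddAbove_image_of_abs_le : BddAbove (g '' s) :=
  ⟨C, forall_mem_image.2 fun x _ => (abs_le.1 (hg x)).2⟩

theorem bddBelow_image_of_abs_le : BddBelow (g '' s) :=
  ⟨-C, forall_mem_image.2 fun x _ => (abs_le.1 (hg x)).1⟩

end AbsBounded

def coordLine (lam : ℝ) (n : ℕ) (a : ℕ → ℝ) : Set (ℕ → ℝ) :=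
  {t | (∀ m, t m ∈ Icc lam 1) ∧ ∀ m, m ≠ n → t m = a m}

def prefixUpdate (n : ℕ) (b : Fin n → ℝ) (t : ℕ → ℝ) : ℕ → ℝ :=
  fun k => if h : k < n then b ⟨k, h⟩ else t k

section Oscillation

variable {lam C : ℝ} {ζ : (ℕ → ℝ) → ℝ} {n : ℕ} {a t t' : ℕ → ℝ}

theorem oscAt_eq :
    oscAt lam ζ n a = sSup (ζ '' coordLine lam n a) - sInf (ζ '' coordLine lam n a) := by
  simp only [oscAt, coordLine, image, eq_comm, and_assoc, mem_ofPred_eq]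

theorem coordLine_eq_image (ht : t ∈ coordLine lam n a) :
    coordLine lam n a = Function.update a n '' Icc lam 1 := by
  ext s
  constructor
  · rintro ⟨hs, hsa⟩
    refine ⟨s n, hs n, funext fun m => ?_⟩
    rcases eq_or_ne m n with rfl | hm
    · simp
    · rw [Function.update_of_ne hm, hsa m hm]
  · rintro ⟨x, hx, rfl⟩
    refine ⟨fun m => ?_, fun m hm => Function.update_of_ne hm _ _⟩
    rcases eq_or_ne m n with rfl | hm
    · simpa using hx
    · rw [Function.update_of_ne hm, ← ht.2 m hm]
      exact ht.1 m

theorem oscAt_le_of_forall_sub_le (hC : 0 ≤ C)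
    (h : ∀ t ∈ coordLine lam n a, ∀ t' ∈ coordLine lam n a, ζ t - ζ t' ≤ C) :
    oscAt lam ζ n a ≤ C := by
  rw [oscAt_eq]
  exact sSup_sub_sInf_le_of_forall_sub_le hC
    (forall_mem_image.2 fun t ht => forall_mem_image.2 fun t' ht' => h t ht t' ht')

variable (hζ : ∀ x, |ζ x| ≤ C)
include hζ

theorem sub_le_oscAt (ht : t ∈ coordLine lam n a) (ht' : t' ∈ coordLine lam n a) :
    ζ t - ζ t' ≤ oscAt lam ζ n a := by
  rw [oscAt_eq]
  exact sub_le_sub (le_csSup (bddAbove_image_of_abs_le hζ _) (mem_image_of_mem ζ ht))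
    (csInf_le (bddBelow_image_of_abs_le hζ _) (mem_image_of_mem ζ ht'))

theorem abs_oscAt_le : |oscAt lam ζ n a| ≤ 2 * C := by
  have hosc_nonneg : 0 ≤ oscAt lam ζ n a := by
    rw [oscAt_eq]
    exact sub_nonneg.2 (Real.sInf_le_sSup _ (bddBelow_image_of_abs_le hζ _)
      (bddAbove_image_of_abs_le hζ _))
  rw [abs_of_nonneg hosc_nonneg]
  refine oscAt_le_of_forall_sub_le (by linarith [(abs_nonneg _).trans (hζ 0)]) fun t _ t' _ => ?_
  linarith [(abs_le.1 (hζ t)).2, (abs_le.1 (hζ t')).1]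

end Oscillation

section PrefixUpdate

variable {lam : ℝ} {n : ℕ} {b : Fin n → ℝ} {a t : ℕ → ℝ}

theorem measurable_prefixUpdate (t : ℕ → ℝ) :
    Measurable fun b : Fin n → ℝ => prefixUpdate n b t :=
  measurable_pi_lambda _ fun k => by
    by_cases h : k < n <;> simp [prefixUpdate, h, measurable_pi_apply]

theorem prefixUpdate_mem_coordLine (hb : ∀ i, b i ∈ Icc lam 1) (ht : t ∈ coordLine lam n a) :
    prefixUpdate n b t ∈ coordLine lam n (prefixUpdate n b a) := by
  refine ⟨fun m => ?_, fun m hm => ?_⟩ <;> unfold prefixUpdate <;> split_ifs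
  exacts [hb _, ht.1 m, rfl, ht.2 m hm]

end PrefixUpdate

section Estimate

variable {lam C : ℝ} {ζ : (ℕ → ℝ) → ℝ} {n : ℕ} {a t t' : ℕ → ℝ} {P : Measure (Fin n → ℝ)}
  [IsFiniteMeasure P]

theorem aemeasurable_oscAt_prefixUpdate (hζ : Measurable ζ) (hC : ∀ x, |ζ x| ≤ C)
    (hbox : ∀ᵐ b ∂P, ∀ i, b i ∈ Icc lam 1) (ht : t ∈ coordLine lam n a) :
    AEMeasurable (fun b => oscAt lam ζ n (prefixUpdate n b a)) P := by
  let G : (Fin n → ℝ) → ℝ → ℝ := fun b x => ζ (Function.update (prefixUpdate n b a) n x)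
  have hG : Measurable (Function.uncurry G) :=
    hζ.comp (measurable_update'.comp ((measurable_prefixUpdate a).prodMap measurable_id))
  have hne : (Icc lam 1).Nonempty := ⟨t n, ht.1 n⟩
  have hosc : (fun b => sSup (G b '' Icc lam 1) - sInf (G b '' Icc lam 1))
      =ᵐ[P] fun b => oscAt lam ζ n (prefixUpdate n b a) := by
    filter_upwards [hbox] with b hb
    rw [oscAt_eq, coordLine_eq_image (prefixUpdate_mem_coordLine hb ht), image_image]
  refine AEMeasurable.congr ?_ hosc
  exact (nullMeasurable_sSup_image P hG measurableSet_Icc hne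
    fun b => bddAbove_image_of_abs_le (fun x => hC _) _).aemeasurable.sub
    (nullMeasurable_sInf_image P hG measurableSet_Icc hne
      fun b => bddBelow_image_of_abs_le (fun x => hC _) _).aemeasurable

theorem sqrt_integral_sq_sub_le_sqrt_integral_oscAt_sq (hζ : Measurable ζ)
    (hC : ∀ x, |ζ x| ≤ C) (hbox : ∀ᵐ b ∂P, ∀ i, b i ∈ Icc lam 1) (ht : t ∈ coordLine lam n a)
    (ht' : t' ∈ coordLine lam n a) :
    √(∫ b, ζ (prefixUpdate n b t) ^ 2 ∂P) - √(∫ b, ζ (prefixUpdate n b t') ^ 2 ∂P)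
      ≤ √(∫ b, oscAt lam ζ n (prefixUpdate n b a) ^ 2 ∂P) := by
  have hmem (s : ℕ → ℝ) : MemLp (fun b => ζ (prefixUpdate n b s)) 2 P :=
    .of_bound (hζ.comp (measurable_prefixUpdate s)).aestronglyMeasurable C
      (ae_of_all _ fun b => hC _)
  have hosc : MemLp (fun b => oscAt lam ζ n (prefixUpdate n b a)) 2 P :=
    .of_bound (aemeasurable_oscAt_prefixUpdate hζ hC hbox ht).aestronglyMeasurable (2 * C)
      (ae_of_all _ fun b => abs_oscAt_le hC)
  refine (sqrt_integral_sq_sub_le (hmem t) (hmem t')).trans (Real.sqrt_le_sqrt ?_)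
  refine integral_mono_ae ((hmem t).sub (hmem t')).integrable_sq hosc.integrable_sq ?_
  filter_upwards [hbox] with b hb
  have hmem_t := prefixUpdate_mem_coordLine hb ht
  have hmem_t' := prefixUpdate_mem_coordLine hb ht'
  exact sq_le_sq' (by linarith [sub_le_oscAt hC hmem_t' hmem_t]) (sub_le_oscAt hC hmem_t hmem_t')

end Estimate

theorem osc_sqrt_condexp_general (lam : ℝ)
    (μs : ℕ → Measure ℝ) (hprob : ∀ n, IsProbabilityMeasure (μs n))
    (hsuppn : ∀ n, μs n (Set.Icc lam 1)ᶜ = 0)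
    (f : (ℕ → ℝ) → ℝ) (hmeas : Measurable f) (hpos : ∀ a, 0 < f a)
    (hbdd : ∃ M, ∀ a, |f a| ≤ M) :
    ∀ (n : ℕ) (a : ℕ → ℝ),
      oscAt lam (fun a' => Real.sqrt (avgBelow μs n f a')) n a
        ≤ Real.sqrt (avgBelow μs n
            (fun a' => (oscAt lam (fun a'' => Real.sqrt (f a'')) n a') ^ 2) a) := by
  intro n a
  obtain ⟨M, hM⟩ := hbdd
  have hsqrt_le (x : ℕ → ℝ) : |√(f x)| ≤ √M := by
    rw [abs_of_nonneg (Real.sqrt_nonneg _)]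
    exact Real.sqrt_le_sqrt (le_of_abs_le (hM x))
  have : ∀ i : Fin n, IsProbabilityMeasure (μs i) := fun i => hprob i
  have hbox : ∀ᵐ b ∂Measure.pi (fun i : Fin n => μs i), ∀ i, b i ∈ Icc lam 1 :=
    ae_all_iff.2 fun i => Measure.tendsto_eval_ae_ae.eventually (ae_iff.2 (hsuppn i))
  have havg (s : ℕ → ℝ) : avgBelow μs n f s
      = ∫ b, √(f (prefixUpdate n b s)) ^ 2 ∂Measure.pi fun i : Fin n => μs i :=
    integral_congr_ae (ae_of_all _ fun b => (Real.sq_sqrt (hpos _).le).symm)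
  refine oscAt_le_of_forall_sub_le (Real.sqrt_nonneg _) fun t ht t' ht' => ?_
  rw [havg, havg]
  exact sqrt_integral_sq_sub_le_sqrt_integral_oscAt_sq hmeas.sqrt hsqrt_le hbox ht ht'

/-- The oscillation of the square root of a conditional average is bounded by the
L²-average of the oscillation of the square root. -/
theorem osc_sqrt_condexp (lam : ℝ) (hlam : 0 < lam) (hlam1 : lam ≤ 1)
    (μs : ℕ → Measure ℝ) (hprob : ∀ n, IsProbabilityMeasure (μs n))
    (hsuppn : ∀ n, μs n (Set.Icc lam 1)ᶜ = 0)
    (f : (ℕ → ℝ) → ℝ) (hmeas : Measurable f) (hpos : ∀ a, 0 < f a)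
    (hbdd : ∃ M, ∀ a, |f a| ≤ M)
    (hcyl : ∃ N : ℕ, ∀ a a' : ℕ → ℝ, (∀ n < N, a n = a' n) → f a = f a') :
    ∀ (n : ℕ) (a : ℕ → ℝ),
      oscAt lam (fun a' => Real.sqrt (avgBelow μs n f a')) n a
        ≤ Real.sqrt (avgBelow μs n
            (fun a' => (oscAt lam (fun a'' => Real.sqrt (f a'')) n a') ^ 2) a) :=
  osc_sqrt_condexp_general lam μs hprob hsuppn f hmeas hpos hbdd
end

section
/- Let d ≥ 3 and let K : ℤ^d × ℤ^d → ℝ satisfy |K(x,y)| ≤ ((|x−y|+1)(|y|+1))^{2(1−d)}. Then ∑_{y∈ℤ^d} |K(x,y)| ≤ C(d)·(|x|+1)^{2(1−d)} for all x ∈ ℤ^d, with a constant C(d) depending only on d. In dimension d = 2, one instead has ∑_{y∈ℤ²} ((|x−y|+1)(|y|+1))^{−2} ≤ C·(|x|+1)^{−2}·log(|x|+2). -/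
/-!
If `|x - y| ≤ |y|`, then `|y| + 1 ≥ (|x| + 1) / 2` by the triangle inequality, so the factor
`(|y| + 1) ^ (-a)` of the kernel is at most both `((|x| + 1) / 2) ^ (-a)` and
`(|x - y| + 1) ^ (-a)`: the kernel is dominated by `cappedDecay` of the smaller of the two
distances. Summed over `y`, using translation invariance, this gives
`2 ^ (a + 1) ∑ (|y| + 1) ^ (-a) · (|x| + 1) ^ (-a)`, finite when `a > d` (compare with a product
of one-dimensional `p`-series).

For `d = a = 2` that series diverges, and the cap is needed: counting the at most `8 (n + 1)`
points of sup-norm `n` in `ℤ²` reduces the sum to `∑ k⁻¹ min (4 / m², k⁻²)` with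
`m = |x| + 1`. Splitting at `k = ⌊m⌋` bounds the head by a harmonic sum,
`≤ 4 (1 + log m) / m²`, and the tail by `∑_{k > m} k⁻³ ≤ 2 / m²`.
-/

open Real

/-- The Euclidean norm of a lattice point of `ℤ^d`. -/
noncomputable def znorm {d : ℕ} (x : Fin d → ℤ) : ℝ :=
  Real.sqrt (∑ i, ((x i : ℝ)) ^ 2)

open Finset

lemma znorm_eq_norm {d : ℕ} (x : Fin d → ℤ) :
    znorm x = ‖WithLp.toLp 2 (Int.cast ∘ x : Fin d → ℝ)‖ := by
  simp [znorm, EuclideanSpace.norm_eq]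

lemma znorm_nonneg {d : ℕ} (x : Fin d → ℤ) : 0 ≤ znorm x := Real.sqrt_nonneg _

lemma znorm_le_znorm_sub_add {d : ℕ} (x y : Fin d → ℤ) :
    znorm x ≤ znorm (x - y) + znorm y := by
  have h : (Int.cast ∘ (x - y) : Fin d → ℝ) = Int.cast ∘ x - Int.cast ∘ y := by
    ext; simp
  rw [znorm_eq_norm, znorm_eq_norm, znorm_eq_norm, h, WithLp.toLp_sub]
  linarith [norm_sub_norm_le (WithLp.toLp 2 (Int.cast ∘ x : Fin d → ℝ))
    (WithLp.toLp 2 (Int.cast ∘ y))]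

lemma abs_le_znorm {d : ℕ} (x : Fin d → ℤ) (i : Fin d) : |(x i : ℝ)| ≤ znorm x :=
  Real.abs_le_sqrt <|
    single_le_sum (f := fun j => ((x j : ℝ)) ^ 2) (fun _ _ => sq_nonneg _) (mem_univ i)

lemma summable_pi_prod {β : Type*} {d : ℕ} {f : β → ℝ} (hf0 : 0 ≤ f) (hf : Summable f) :
    Summable (fun y : Fin d → β => ∏ i, f (y i)) := by
  induction d with
  | zero => exact .of_finite
  | succ d ih =>
    rw [← (Fin.consEquiv fun _ => β).summable_iff]
    refine (hf.mul_of_nonneg ih hf0 fun y => prod_nonneg fun i _ => hf0 _).congr fun p => ?_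
    simp [Fin.consEquiv, Fin.prod_univ_succ]

lemma summable_abs_add_one_rpow_neg {s : ℝ} (hs : 1 < s) :
    Summable (fun t : ℤ => (|(t : ℝ)| + 1) ^ (-s)) := by
  refine (Real.summable_abs_int_rpow hs).of_norm_bounded_eventually ?_
  filter_upwards [(Set.finite_singleton (0 : ℤ)).compl_mem_cofinite] with t ht
  have ht : 0 < |(t : ℝ)| := by simpa using ht
  rw [Real.norm_of_nonneg (by positivity), Real.rpow_neg (by positivity), Real.rpow_neg ht.le]
  gcongr
  linarith

lemma summable_znorm_add_one_rpow_neg {d : ℕ} {a : ℝ} (hda : (d : ℝ) < a) :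
    Summable (fun y : Fin d → ℤ => (znorm y + 1) ^ (-a)) := by
  rcases Nat.eq_zero_or_pos d with rfl | hd
  · exact .of_finite
  have hd' : (0 : ℝ) < d := by exact_mod_cast hd
  refine (summable_pi_prod (fun t => by positivity)
    (summable_abs_add_one_rpow_neg ((one_lt_div hd').2 hda))).of_nonneg_of_le
    (fun y => Real.rpow_nonneg (by linarith [znorm_nonneg y]) _) fun y => ?_
  have hy : 0 < znorm y + 1 := by linarith [znorm_nonneg y]
  calc (znorm y + 1) ^ (-a) = ∏ _i : Fin d, (znorm y + 1) ^ (-(a / d)) := by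
        rw [prod_const, card_univ, Fintype.card_fin, ← Real.rpow_mul_natCast hy.le]
        field_simp
    _ ≤ ∏ i, (|(y i : ℝ)| + 1) ^ (-(a / d)) := by
        refine prod_le_prod (fun _ _ => Real.rpow_nonneg hy.le _) fun i _ => ?_
        exact Real.rpow_le_rpow_of_nonpos (by positivity) (by linarith [abs_le_znorm y i])
          (by have := div_pos (hd'.trans hda) hd'; linarith)

noncomputable def cappedDecay (r a t : ℝ) : ℝ := t ^ (-a) * min (r ^ (-a)) (t ^ (-a))

section cappedDecay

variable {r a t : ℝ}

lemma cappedDecay_nonneg (hr : 0 ≤ r) (ht : 0 ≤ t) : 0 ≤ cappedDecay r a t :=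
  mul_nonneg (Real.rpow_nonneg ht _) (le_min (Real.rpow_nonneg hr _) (Real.rpow_nonneg ht _))

lemma cappedDecay_le (ht : 0 ≤ t) : cappedDecay r a t ≤ r ^ (-a) * t ^ (-a) := by
  rw [cappedDecay, mul_comm]
  exact mul_le_mul_of_nonneg_right (min_le_left _ _) (Real.rpow_nonneg ht _)

lemma cappedDecay_anti (hr : 0 ≤ r) (ha : 0 ≤ a) {s : ℝ} (hs : 0 < s) (hst : s ≤ t) :
    cappedDecay r a t ≤ cappedDecay r a s := by
  have h : t ^ (-a) ≤ s ^ (-a) := Real.rpow_le_rpow_of_nonpos hs hst (by linarith)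
  have ht : 0 ≤ t ^ (-a) := Real.rpow_nonneg (hs.le.trans hst) _
  exact mul_le_mul h (min_le_min_left _ h) (le_min (Real.rpow_nonneg hr _) ht)
    (Real.rpow_nonneg hs.le _)

/-- If `A ≤ B`, the factor `B ^ (-a)` is at most both `A ^ (-a)` and, since
`B ≥ (A + B) / 2 ≥ r`, `r ^ (-a)`. -/
lemma mul_rpow_neg_le_cappedDecay_add {A B : ℝ} (ha : 0 ≤ a) (hr : 0 < r) (hA : 0 < A)
    (hB : 0 < B) (hAB : 2 * r ≤ A + B) :
    (A * B) ^ (-a) ≤ cappedDecay r a A + cappedDecay r a B := by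
  wlog h : A ≤ B generalizing A B
  · rw [mul_comm, add_comm]
    exact this hB hA (by linarith) (by linarith)
  have hBmin : B ^ (-a) ≤ min (r ^ (-a)) (A ^ (-a)) :=
    le_min (Real.rpow_le_rpow_of_nonpos hr (by linarith) (by linarith))
      (Real.rpow_le_rpow_of_nonpos hA h (by linarith))
  rw [Real.mul_rpow hA.le hB.le]
  calc A ^ (-a) * B ^ (-a) ≤ cappedDecay r a A :=
        mul_le_mul_of_nonneg_left hBmin (Real.rpow_nonneg hA.le _)
    _ ≤ _ := le_add_of_nonneg_right (cappedDecay_nonneg hr.le hB.le)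

end cappedDecay

lemma kernel_le_cappedDecay_add {d : ℕ} {a : ℝ} (ha : 0 ≤ a) (x y : Fin d → ℤ) :
    ((znorm (x - y) + 1) * (znorm y + 1)) ^ (-a) ≤
      cappedDecay ((znorm x + 1) / 2) a (znorm (x - y) + 1) +
        cappedDecay ((znorm x + 1) / 2) a (znorm y + 1) := by
  have := znorm_le_znorm_sub_add x y
  have := znorm_nonneg x
  have := znorm_nonneg y
  have := znorm_nonneg (x - y)
  exact mul_rpow_neg_le_cappedDecay_add ha (by positivity) (by positivity) (by positivity)
    (by linarith)

lemma tsum_le_two_mul_tsum_of_le_add_sub {G : Type*} [AddGroup G] {f g : G → ℝ} (x : G)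
    (hf0 : 0 ≤ f) (hfg : ∀ y, f y ≤ g (x - y) + g y) (hg : Summable g) :
    Summable f ∧ ∑' y, f y ≤ 2 * ∑' y, g y := by
  have hgx : Summable fun y => g (x - y) := (Equiv.subLeft x).summable_iff.2 hg
  have hf : Summable f := (hgx.add hg).of_nonneg_of_le hf0 hfg
  refine ⟨hf, ?_⟩
  calc ∑' y, f y ≤ ∑' y, (g (x - y) + g y) := hf.tsum_le_tsum hfg (hgx.add hg)
    _ = 2 * ∑' y, g y := by
      rw [hgx.tsum_add hg, show ∑' y, g (x - y) = ∑' y, g y from (Equiv.subLeft x).tsum_eq g]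
      ring

theorem tsum_abs_le_of_abs_le_kernel {d : ℕ} {a : ℝ} (hda : (d : ℝ) < a) :
    ∃ C : ℝ, ∀ K : (Fin d → ℤ) → (Fin d → ℤ) → ℝ,
      (∀ x y, |K x y| ≤ ((znorm (x - y) + 1) * (znorm y + 1)) ^ (-a)) →
      ∀ x, ∑' y, |K x y| ≤ C * (znorm x + 1) ^ (-a) := by
  have ha : 0 ≤ a := (Nat.cast_nonneg d).trans hda.le
  have hS := summable_znorm_add_one_rpow_neg hda
  refine ⟨2 ^ (a + 1) * ∑' y : Fin d → ℤ, (znorm y + 1) ^ (-a), fun K hK x => ?_⟩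
  set r := (znorm x + 1) / 2
  have hr : 0 < r := by have := znorm_nonneg x; positivity
  have hle : ∀ y, |K x y| ≤
      r ^ (-a) * (znorm (x - y) + 1) ^ (-a) + r ^ (-a) * (znorm y + 1) ^ (-a) := fun y =>
    (hK x y).trans <| (kernel_le_cappedDecay_add ha x y).trans <|
      add_le_add (cappedDecay_le (by linarith [znorm_nonneg (x - y)]))
        (cappedDecay_le (by linarith [znorm_nonneg y]))
  have hr2 : r ^ (-a) = 2 ^ a * (znorm x + 1) ^ (-a) := by
    rw [Real.div_rpow (by linarith [znorm_nonneg x]) zero_le_two, Real.rpow_neg zero_le_two,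
      div_inv_eq_mul, mul_comm]
  calc ∑' y, |K x y| ≤ 2 * ∑' y, r ^ (-a) * (znorm y + 1) ^ (-a) :=
        (tsum_le_two_mul_tsum_of_le_add_sub x (fun y => abs_nonneg _) hle (hS.mul_left _)).2
    _ = _ := by rw [tsum_mul_left, hr2, Real.rpow_add_one two_ne_zero]; ring

lemma sum_range_inv_mul_min_le {c : ℝ} (hc : 0 ≤ c) (M N : ℕ) :
    ∑ k ∈ range N, (k : ℝ)⁻¹ * min c ((k : ℝ) ^ 2)⁻¹ ≤
      c * (1 + log M) + 2 / ((M : ℝ) + 1) ^ 2 := by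
  rw [← sum_filter_add_sum_filter_not (range N) (· ≤ M)]
  gcongr
  · calc ∑ k ∈ range N with k ≤ M, (k : ℝ)⁻¹ * min c ((k : ℝ) ^ 2)⁻¹
        ≤ ∑ k ∈ range (M + 1), c * (k : ℝ)⁻¹ := by
          refine (sum_le_sum fun k _ => ?_).trans
            (sum_le_sum_of_subset_of_nonneg (fun k hk => ?_) fun _ _ _ => by positivity)
          · rw [mul_comm c]; exact mul_le_mul_of_nonneg_left (min_le_left _ _) (by positivity)
          · simp only [mem_filter, mem_range] at hk ⊢; omega
      _ = c * harmonic M := by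
          rw [← mul_sum, sum_range_succ']
          simp [harmonic]
      _ ≤ c * (1 + log M) := mul_le_mul_of_nonneg_left (harmonic_le_one_add_log M) hc
  · calc ∑ k ∈ range N with ¬k ≤ M, (k : ℝ)⁻¹ * min c ((k : ℝ) ^ 2)⁻¹
        ≤ ∑ k ∈ Ioo M N, ((M : ℝ) + 1)⁻¹ * ((k : ℝ) ^ 2)⁻¹ := by
          refine (sum_le_sum fun k hk => ?_).trans
            (sum_le_sum_of_subset_of_nonneg (fun k hk => ?_) fun _ _ _ => by positivity)
          · have hk : (M : ℝ) + 1 ≤ k := by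
              simp only [mem_filter] at hk; exact_mod_cast (not_le.1 hk.2)
            exact mul_le_mul (inv_anti₀ (by positivity) hk) (min_le_right _ _)
              (le_min hc (by positivity)) (by positivity)
          · simp only [mem_filter, mem_range, mem_Ioo] at hk ⊢; omega
      _ ≤ ((M : ℝ) + 1)⁻¹ * (2 / ((M : ℝ) + 1)) := by
          rw [← mul_sum]
          exact mul_le_mul_of_nonneg_left (sum_Ioo_inv_sq_le M N) (by positivity)
      _ = 2 / ((M : ℝ) + 1) ^ 2 := by field_simp

lemma succ_mul_cappedDecay_two {r : ℝ} (n : ℕ) :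
    ((n : ℝ) + 1) * cappedDecay r 2 ((n : ℝ) + 1) =
      (((n + 1 : ℕ) : ℝ))⁻¹ * min (r ^ (-2 : ℝ)) ((((n + 1 : ℕ) : ℝ)) ^ 2)⁻¹ := by
  have hn : (0 : ℝ) < n + 1 := by positivity
  rw [cappedDecay, Real.rpow_neg hn.le, Real.rpow_two]
  push_cast
  field_simp

lemma tsum_succ_mul_cappedDecay_two_le {r : ℝ} (hr : 0 ≤ r) (M : ℕ) :
    Summable (fun n : ℕ => ((n : ℝ) + 1) * cappedDecay r 2 ((n : ℝ) + 1)) ∧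
      ∑' n : ℕ, ((n : ℝ) + 1) * cappedDecay r 2 ((n : ℝ) + 1) ≤
        r ^ (-2 : ℝ) * (1 + log M) + 2 / ((M : ℝ) + 1) ^ 2 := by
  have hpartial : ∀ N, ∑ n ∈ range N, ((n : ℝ) + 1) * cappedDecay r 2 ((n : ℝ) + 1) ≤
      r ^ (-2 : ℝ) * (1 + log M) + 2 / ((M : ℝ) + 1) ^ 2 := fun N => by
    have h := sum_range_inv_mul_min_le (Real.rpow_nonneg hr (-2)) M (N + 1)
    rwa [sum_range_succ', Nat.cast_zero, inv_zero, zero_mul, add_zero,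
      ← sum_congr rfl fun n _ => succ_mul_cappedDecay_two n] at h
  have hnonneg : ∀ n : ℕ, 0 ≤ ((n : ℝ) + 1) * cappedDecay r 2 ((n : ℝ) + 1) :=
    fun n => mul_nonneg (by positivity) (cappedDecay_nonneg hr (by positivity))
  exact ⟨summable_of_sum_range_le hnonneg hpartial,
    Real.tsum_le_of_sum_range_le hnonneg hpartial⟩

lemma sum_comp_le_tsum_mul {α : Type*} (N : α → ℕ) {w g : ℕ → ℝ} (hg : 0 ≤ g)
    (hN : ∀ (s : Finset α) n, (#{z ∈ s | N z = n} : ℝ) ≤ w n)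
    (hw : Summable fun n => w n * g n) (s : Finset α) :
    ∑ z ∈ s, g (N z) ≤ ∑' n, w n * g n := by
  rw [sum_comp]
  calc ∑ n ∈ s.image N, #{z ∈ s | N z = n} • g n ≤ ∑ n ∈ s.image N, w n * g n :=
        sum_le_sum fun n _ => by
          rw [nsmul_eq_mul]; exact mul_le_mul_of_nonneg_right (hN s n) (hg n)
    _ ≤ ∑' n, w n * g n :=
        hw.sum_le_tsum _ fun n _ => mul_nonneg ((Nat.cast_nonneg _).trans (hN ∅ n)) (hg n)

def supNatAbs (z : Fin 2 → ℤ) : ℕ := max (z 0).natAbs (z 1).natAbs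

lemma supNatAbs_le_znorm (z : Fin 2 → ℤ) : (supNatAbs z : ℝ) ≤ znorm z := by
  rw [supNatAbs, Nat.cast_max, max_le_iff, Nat.cast_natAbs, Nat.cast_natAbs]
  push_cast
  exact ⟨abs_le_znorm z 0, abs_le_znorm z 1⟩

lemma card_filter_supNatAbs_eq_le (s : Finset (Fin 2 → ℤ)) (n : ℕ) :
    #{z ∈ s | supNatAbs z = n} ≤ 8 * (n + 1) := by
  have hbox : #(box n : Finset (ℤ × ℤ)) ≤ 8 * (n + 1) := by
    rcases eq_or_ne n 0 with rfl | hn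
    · simp
    · rw [Int.card_box hn]; omega
  refine le_trans (card_le_card_of_injOn (finTwoArrowEquiv ℤ) (fun z hz => ?_)
    (finTwoArrowEquiv ℤ).injective.injOn) hbox
  simpa [Int.mem_box, supNatAbs] using (mem_filter.1 hz).2

lemma half_rpow_neg_two_mul_add_le {m : ℝ} (hm : 1 ≤ m) :
    (m / 2) ^ (-2 : ℝ) * (1 + log ⌊m⌋₊) + 2 / ((⌊m⌋₊ : ℝ) + 1) ^ 2 ≤
      16 * m ^ (-2 : ℝ) * log (m + 1) := by
  have hm0 : 0 < m := by linarith
  have hM : (1 : ℝ) ≤ ⌊m⌋₊ := by exact_mod_cast Nat.le_floor (by simpa using hm)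
  have hlogM : log ⌊m⌋₊ ≤ log (m + 1) :=
    Real.log_le_log (by linarith) (by linarith [Nat.floor_le hm0.le])
  have hlog2 : log 2 ≤ log (m + 1) := Real.log_le_log two_pos (by linarith)
  have htail : 2 / ((⌊m⌋₊ : ℝ) + 1) ^ 2 ≤ 2 * m ^ (-2 : ℝ) := by
    rw [Real.rpow_neg hm0.le, Real.rpow_two, div_eq_mul_inv]
    gcongr
    exact (Nat.lt_floor_add_one m).le
  have hhalf : (m / 2) ^ (-2 : ℝ) = 4 * m ^ (-2 : ℝ) := by
    rw [Real.rpow_neg (by positivity), Real.rpow_neg hm0.le, Real.rpow_two, Real.rpow_two]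
    field_simp
    norm_num
  have hp : 0 ≤ m ^ (-2 : ℝ) := Real.rpow_nonneg hm0.le _
  rw [hhalf]
  nlinarith [Real.log_two_gt_d9, mul_le_mul_of_nonneg_left hlogM hp,
    mul_le_mul_of_nonneg_left hlog2 hp]

theorem tsum_kernel_two_le :
    ∃ C : ℝ, ∀ x : Fin 2 → ℤ,
      ∑' y : Fin 2 → ℤ, ((znorm (x - y) + 1) * (znorm y + 1)) ^ (-2 : ℝ)
        ≤ C * (znorm x + 1) ^ (-2 : ℝ) * Real.log (znorm x + 2) := by
  refine ⟨256, fun x => ?_⟩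
  set m := znorm x + 1
  have hm : 1 ≤ m := by linarith [znorm_nonneg x]
  have hr : 0 ≤ m / 2 := by positivity
  set g : ℕ → ℝ := fun n => cappedDecay (m / 2) 2 ((n : ℝ) + 1)
  have hg0 : 0 ≤ g := fun n => cappedDecay_nonneg hr (by positivity)
  obtain ⟨hw, hw_le⟩ := tsum_succ_mul_cappedDecay_two_le hr ⌊m⌋₊
  have hlayer (s : Finset (Fin 2 → ℤ)) :
      ∑ y ∈ s, g (supNatAbs y) ≤ ∑' n : ℕ, 8 * ((n + 1) * g n) := by
    simp_rw [← mul_assoc]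
    refine sum_comp_le_tsum_mul supNatAbs hg0 (fun s n => ?_) ?_ s
    · exact_mod_cast card_filter_supNatAbs_eq_le s n
    · simpa only [mul_assoc] using hw.mul_left 8
  have hG : Summable fun y => g (supNatAbs y) := summable_of_sum_le (fun _ => hg0 _) hlayer
  have hFG (y : Fin 2 → ℤ) : cappedDecay (m / 2) 2 (znorm y + 1) ≤ g (supNatAbs y) :=
    cappedDecay_anti hr zero_le_two (by positivity) (by linarith [supNatAbs_le_znorm y])
  have hF : Summable fun y => cappedDecay (m / 2) 2 (znorm y + 1) :=
    hG.of_nonneg_of_le (fun y => cappedDecay_nonneg hr (by linarith [znorm_nonneg y])) hFG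
  have hkernel := tsum_le_two_mul_tsum_of_le_add_sub x
    (fun y => Real.rpow_nonneg (by nlinarith [znorm_nonneg (x - y), znorm_nonneg y]) _)
    (kernel_le_cappedDecay_add zero_le_two x) hF
  calc _ ≤ 2 * ∑' y, cappedDecay (m / 2) 2 (znorm y + 1) := hkernel.2
    _ ≤ 2 * (8 * ((m / 2) ^ (-2 : ℝ) * (1 + log ⌊m⌋₊) +
        2 / ((⌊m⌋₊ : ℝ) + 1) ^ 2)) := by
      gcongr
      refine (hF.tsum_le_tsum hFG hG).trans (Real.tsum_le_of_sum_le (fun _ => hg0 _) fun s => ?_)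
      exact (hlayer s).trans <| by
        rw [tsum_mul_left]; exact mul_le_mul_of_nonneg_left hw_le (by norm_num)
    _ ≤ 256 * m ^ (-2 : ℝ) * log (m + 1) := by
      linarith [half_rpow_neg_two_mul_add_le hm]
    _ = _ := by rw [show m + 1 = znorm x + 2 by ring]

/-- Convolution estimate for the kernel `((|x−y|+1)(|y|+1))^{2(1−d)}` on `ℤ^d`:
summability with optimal decay for `d ≥ 3`, and a logarithmic correction for `d = 2`. -/
theorem kernel_convolution_estimate :
    (∀ d : ℕ, 3 ≤ d → ∃ C : ℝ, ∀ K : (Fin d → ℤ) → (Fin d → ℤ) → ℝ,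
      (∀ x y, |K x y| ≤ ((znorm (x - y) + 1) * (znorm y + 1)) ^ (2 * (1 - (d : ℝ)))) →
      ∀ x, ∑' y, |K x y| ≤ C * (znorm x + 1) ^ (2 * (1 - (d : ℝ)))) ∧
    (∃ C : ℝ, ∀ x : Fin 2 → ℤ,
      ∑' y : Fin 2 → ℤ, ((znorm (x - y) + 1) * (znorm y + 1)) ^ (-2 : ℝ)
        ≤ C * (znorm x + 1) ^ (-2 : ℝ) * Real.log (znorm x + 2)) := by
  refine ⟨fun d hd => ?_, tsum_kernel_two_le⟩
  have hd' : (3 : ℝ) ≤ d := by exact_mod_cast hd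
  rw [show 2 * (1 - (d : ℝ)) = -(2 * ((d : ℝ) - 1)) by ring]
  exact tsum_abs_le_of_abs_le_kernel (by linarith)
end

section
/- Let d ≥ 1, p ≥ 1, and β > 0 satisfy 2p(β − d) + d < 0. Then for every x ∈ ℤ^d and edge b of ℤ^d, ∑_{e : |e−b| ≥ |b−x|/2} (|e−x|+1)^{2pβ}·(|e−b|+1)^{−2pd} ≤ C(d,p,β)·(|b−x|+1)^{2p(β−d)+d}, where the sum runs over edges e of ℤ^d, |e−b| denotes the distance between edge midpoints, and C(d,p,β) depends only on d, p, β. -/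
open Real

/-- An edge of the lattice `ℤ^d`: the pair `(x, i)` represents the edge `[x, x + eᵢ]`. -/
abbrev Edge (d : ℕ) := (Fin d → ℤ) × Fin d

/-- The midpoint of an edge, as a point of `ℝ^d`. -/
noncomputable def emid {d : ℕ} (e : Edge d) : Fin d → ℝ :=
  fun j => (e.1 j : ℝ) + if j = e.2 then 1 / 2 else 0

/-- The Euclidean distance between the midpoints of two edges. -/
noncomputable def edist' {d : ℕ} (e b : Edge d) : ℝ :=
  Real.sqrt (∑ j, (emid e j - emid b j) ^ 2)

/-- The Euclidean distance between the midpoint of an edge and a vertex. -/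
noncomputable def evdist {d : ℕ} (b : Edge d) (x : Fin d → ℤ) : ℝ :=
  Real.sqrt (∑ j, (emid b j - (x j : ℝ)) ^ 2)

/-!
On the region `|e - b| ≥ |b - x| / 2` the triangle inequality gives
`|e - x| + 1 ≤ 3 (|e - b| + 1)`, so the summand is at most `3^(2pβ) (|e - b| + 1)^s` with
`s = 2p(β - d)`. A ball of radius `r` contains `O(r^d)` edges, so splitting the region into dyadic
shells around `b` turns the sum into a geometric series of ratio `2^(s + d) < 1`, whose first term
is of order `(|b - x| + 1)^(s + d)`.
-/

open scoped ENNReal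

def dyadicShell {α : Type*} (ρ : α → ℝ) (a : ℝ) (k : ℕ) : Set α :=
  {x | 2 ^ k * a ≤ ρ x ∧ ρ x < 2 ^ (k + 1) * a}

lemma indicator_rpow_le_tsum_dyadicShell {α : Type*} (ρ : α → ℝ) {a s : ℝ} (ha : 0 < a)
    (hs : s ≤ 0) (x : α) :
    {x | a ≤ ρ x}.indicator (fun x => ENNReal.ofReal (ρ x ^ s)) x
      ≤ ∑' k, (dyadicShell ρ a k).indicator (fun _ => ENNReal.ofReal ((2 ^ k * a) ^ s)) x := by
  by_cases hx : a ≤ ρ x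
  · obtain ⟨k, hk⟩ := exists_nat_pow_near ((one_le_div ha).2 hx) one_lt_two
    rw [le_div_iff₀ ha, div_lt_iff₀ ha] at hk
    refine le_trans ?_ (ENNReal.le_tsum k)
    rw [Set.indicator_of_mem (show x ∈ {x | a ≤ ρ x} from hx),
      Set.indicator_of_mem (show x ∈ dyadicShell ρ a k from hk)]
    exact ENNReal.ofReal_le_ofReal (Real.rpow_le_rpow_of_nonpos (by positivity) hk.1 hs)
  · simp [hx]

lemma tsum_indicator_rpow_le_of_encard_le {α : Type*} (ρ : α → ℝ) {K a s d : ℝ}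
    (hK : 0 ≤ K) (ha : 0 < a) (hs : s ≤ 0) (hsd : s + d < 0)
    (hcount : ∀ r, a ≤ r →
      ({x | ρ x ≤ r}.encard : ℝ≥0∞) ≤ ENNReal.ofReal (K * r ^ d)) :
    ∑' x, {x | a ≤ ρ x}.indicator (fun x => ENNReal.ofReal (ρ x ^ s)) x
      ≤ ENNReal.ofReal (K * 2 ^ d / (1 - 2 ^ (s + d)) * a ^ (s + d)) := by
  set q : ℝ := 2 ^ (s + d)
  have hq0 : 0 ≤ q := by positivity
  have hq1 : q < 1 := Real.rpow_lt_one_of_one_lt_of_neg one_lt_two hsd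
  have shell_sum : ∀ k : ℕ,
      ∑' x, (dyadicShell ρ a k).indicator (fun _ => ENNReal.ofReal ((2 ^ k * a) ^ s)) x
        ≤ ENNReal.ofReal (K * 2 ^ d * a ^ (s + d) * q ^ k) := by
    intro k
    have hsub : dyadicShell ρ a k ⊆ {x | ρ x ≤ 2 ^ (k + 1) * a} := fun x hx => hx.2.le
    rw [← tsum_subtype, ENNReal.tsum_set_const]
    calc ((dyadicShell ρ a k).encard : ℝ≥0∞) * ENNReal.ofReal ((2 ^ k * a) ^ s)
        ≤ ENNReal.ofReal (K * (2 ^ (k + 1) * a) ^ d) * ENNReal.ofReal ((2 ^ k * a) ^ s) := by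
          gcongr
          exact (ENat.toENNReal_le.2 (Set.encard_le_encard hsub)).trans
            (hcount _ (le_mul_of_one_le_left ha.le (one_le_pow₀ one_le_two)))
      _ = ENNReal.ofReal (K * 2 ^ d * a ^ (s + d) * q ^ k) := by
          rw [← ENNReal.ofReal_mul (by positivity)]
          congr 1
          rw [Real.mul_rpow (by positivity) ha.le, Real.mul_rpow (by positivity) ha.le,
            Real.rpow_add ha, show q = 2 ^ s * 2 ^ d from Real.rpow_add two_pos _ _, pow_succ,
            Real.mul_rpow (by positivity) two_pos.le, ← Real.rpow_pow_comm two_pos.le,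
            ← Real.rpow_pow_comm two_pos.le, mul_pow]
          ring
  have geom : ∑' k : ℕ, ENNReal.ofReal (K * 2 ^ d * a ^ (s + d) * q ^ k)
      = ENNReal.ofReal (K * 2 ^ d / (1 - q) * a ^ (s + d)) := by
    rw [← ENNReal.ofReal_tsum_of_nonneg (fun k => by positivity)
      ((summable_geometric_of_lt_one hq0 hq1).mul_left _), tsum_mul_left,
      tsum_geometric_of_lt_one hq0 hq1]
    ring_nf
  calc _ ≤ ∑' x, ∑' k, (dyadicShell ρ a k).indicator
          (fun _ => ENNReal.ofReal ((2 ^ k * a) ^ s)) x :=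
        ENNReal.tsum_le_tsum (indicator_rpow_le_tsum_dyadicShell ρ ha hs)
    _ = ∑' k, ∑' x, (dyadicShell ρ a k).indicator
          (fun _ => ENNReal.ofReal ((2 ^ k * a) ^ s)) x := ENNReal.tsum_comm
    _ ≤ _ := (ENNReal.tsum_le_tsum shell_sum).trans geom.le

lemma tsum_indicator_le_mul_of_ofReal_le {α : Type*} {S : Set α} {f : α → ℝ}
    {g : α → ℝ≥0∞} {A c : ℝ} (hf : ∀ a ∈ S, 0 ≤ f a) (hA : 0 ≤ A) (hc : 0 ≤ c)
    (hfg : ∀ a ∈ S, ENNReal.ofReal (f a) ≤ ENNReal.ofReal A * g a)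
    (hg : ∑' a, S.indicator g a ≤ ENNReal.ofReal c) :
    ∑' a, S.indicator f a ≤ A * c := by
  have hf' : ∀ a, 0 ≤ S.indicator f a := fun a => Set.indicator_nonneg hf a
  by_cases hs : Summable (S.indicator f)
  · rw [← ENNReal.ofReal_le_ofReal_iff (by positivity), ENNReal.ofReal_tsum_of_nonneg hf' hs,
      ENNReal.ofReal_mul hA]
    calc ∑' a, ENNReal.ofReal (S.indicator f a)
        ≤ ∑' a, ENNReal.ofReal A * S.indicator g a := ENNReal.tsum_le_tsum fun a => by
          by_cases ha : a ∈ S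
          · simpa [ha] using hfg a ha
          · simp [ha]
      _ = ENNReal.ofReal A * ∑' a, S.indicator g a := ENNReal.tsum_mul_left
      _ ≤ ENNReal.ofReal A * ENNReal.ofReal c := by gcongr
  · rw [tsum_eq_zero_of_not_summable hs]
    positivity

section Edge

variable {d : ℕ}

lemma edist'_nonneg (e b : Edge d) : 0 ≤ edist' e b := Real.sqrt_nonneg _

lemma evdist_nonneg (b : Edge d) (x : Fin d → ℤ) : 0 ≤ evdist b x := Real.sqrt_nonneg _

lemma edist'_eq_dist (e b : Edge d) :
    edist' e b =
      dist (WithLp.toLp 2 (emid e) : EuclideanSpace ℝ (Fin d)) (WithLp.toLp 2 (emid b)) := by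
  simp only [edist', EuclideanSpace.dist_eq, Real.dist_eq, sq_abs]

lemma evdist_eq_dist (b : Edge d) (x : Fin d → ℤ) :
    evdist b x = dist (WithLp.toLp 2 (emid b) : EuclideanSpace ℝ (Fin d))
      (WithLp.toLp 2 fun j => (x j : ℝ)) := by
  simp only [evdist, EuclideanSpace.dist_eq, Real.dist_eq, sq_abs]

lemma evdist_le_edist'_add (e b : Edge d) (x : Fin d → ℤ) :
    evdist e x ≤ edist' e b + evdist b x := by
  rw [evdist_eq_dist, evdist_eq_dist, edist'_eq_dist]
  exact dist_triangle _ _ _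

lemma abs_emid_sub_le (e : Edge d) (j : Fin d) : |emid e j - e.1 j| ≤ 1 / 2 := by
  unfold emid
  split_ifs <;> norm_num [abs_of_pos]

lemma abs_coord_sub_le_edist'_add_one (e b : Edge d) (j : Fin d) :
    |(e.1 j : ℝ) - b.1 j| ≤ edist' e b + 1 := by
  have hj : |emid e j - emid b j| ≤ edist' e b := by
    simpa [edist'_eq_dist, Real.dist_eq] using PiLp.dist_apply_le
      (WithLp.toLp 2 (emid e) : EuclideanSpace ℝ (Fin d)) (WithLp.toLp 2 (emid b)) j
  have he := abs_emid_sub_le e j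
  have hb := abs_emid_sub_le b j
  rw [abs_le] at *
  constructor <;> linarith

lemma encard_setOf_edist'_le (b : Edge d) {r : ℝ} (hr : 0 ≤ r) :
    ({e : Edge d | edist' e b ≤ r}.encard : ℝ≥0∞)
      ≤ ENNReal.ofReal (d * (2 * r + 3) ^ d) := by
  set N : ℕ := ⌊r + 1⌋₊
  set box : Finset (Edge d) :=
    Fintype.piFinset (fun j => Finset.Icc (b.1 j - N) (b.1 j + N)) ×ˢ Finset.univ
  have hsub : {e : Edge d | edist' e b ≤ r} ⊆ box := by
    intro e he
    simp only [box, Finset.coe_product, Set.mem_prod, Finset.mem_coe, Fintype.mem_piFinset,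
      Finset.mem_Icc, Finset.mem_univ, and_true]
    intro j
    have hj : ((e.1 j - b.1 j).natAbs : ℝ) ≤ r + 1 := by
      rw [Nat.cast_natAbs, Int.cast_abs]
      push_cast
      exact (abs_coord_sub_le_edist'_add_one e b j).trans (by gcongr; exact he)
    have : |e.1 j - b.1 j| ≤ N := by
      rw [Int.abs_eq_natAbs]
      exact_mod_cast Nat.le_floor hj
    rw [abs_le] at this
    constructor <;> linarith
  have hN : (N : ℝ) ≤ r + 1 := Nat.floor_le (by linarith)
  calc ({e : Edge d | edist' e b ≤ r}.encard : ℝ≥0∞) ≤ (box.card : ℝ≥0∞) := by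
        exact_mod_cast (Set.encard_le_encard hsub).trans (Set.encard_coe_eq_coe_finsetCard box).le
    _ = ENNReal.ofReal (d * (2 * N + 1) ^ d) := by
        rw [← ENNReal.ofReal_natCast]
        congr 1
        have hcard : ∀ i, (b.1 i + N + 1 - (b.1 i - N)).toNat = 2 * N + 1 := fun i => by omega
        simp [box, Finset.card_product, Fintype.card_piFinset, Int.card_Icc, hcard, mul_comm]
    _ ≤ ENNReal.ofReal (d * (2 * r + 3) ^ d) := by
        have : 2 * (N : ℝ) + 1 ≤ 2 * r + 3 := by linarith
        gcongr

lemma exists_tsum_edist'_tail_le {s : ℝ} (hsd : s + d < 0) :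
    ∃ C : ℝ, 0 ≤ C ∧ ∀ (b : Edge d) (R : ℝ), 0 ≤ R →
      ∑' e : Edge d, {e | R / 2 ≤ edist' e b}.indicator
          (fun e => ENNReal.ofReal ((edist' e b + 1) ^ s)) e
        ≤ ENNReal.ofReal (C * (R + 1) ^ (s + d)) := by
  have hs : s ≤ 0 := by linarith [d.cast_nonneg (α := ℝ)]
  set K : ℝ := d * 3 ^ d
  set C₀ : ℝ := K * 2 ^ (d : ℝ) / (1 - 2 ^ (s + d))
  have hC₀ : 0 ≤ C₀ := div_nonneg (by positivity)
    (sub_nonneg.2 (Real.rpow_le_one_of_one_le_of_nonpos one_le_two hsd.le))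
  refine ⟨C₀ * 2 ^ (-(s + d)), by positivity, fun b R hR => ?_⟩
  have hcount : ∀ r, R / 2 + 1 ≤ r →
      ({e | edist' e b + 1 ≤ r}.encard : ℝ≥0∞) ≤ ENNReal.ofReal (K * r ^ (d : ℝ)) := by
    intro r hr
    have hr1 : 2 * (r - 1) + 3 ≤ 3 * r := by linarith
    simp_rw [← le_sub_iff_add_le]
    refine (encard_setOf_edist'_le b (by linarith)).trans (ENNReal.ofReal_le_ofReal ?_)
    have hr0 : 0 ≤ 2 * (r - 1) + 3 := by linarith
    rw [Real.rpow_natCast, mul_assoc, ← mul_pow]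
    gcongr
  have hregion : {e : Edge d | R / 2 ≤ edist' e b} = {e | R / 2 + 1 ≤ edist' e b + 1} := by
    simp_rw [add_le_add_iff_right]
  rw [hregion]
  refine (tsum_indicator_rpow_le_of_encard_le (fun e => edist' e b + 1) (by positivity)
    (by positivity) hs hsd hcount).trans (ENNReal.ofReal_le_ofReal ?_)
  have hhalf : (R / 2 + 1) ^ (s + d) ≤ ((R + 1) / 2) ^ (s + d) :=
    Real.rpow_le_rpow_of_nonpos (by positivity) (by linarith) hsd.le
  rw [Real.div_rpow (by positivity) zero_le_two] at hhalf
  calc C₀ * (R / 2 + 1) ^ (s + d) ≤ C₀ * ((R + 1) ^ (s + d) / 2 ^ (s + d)) := by gcongr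
    _ = C₀ * 2 ^ (-(s + d)) * (R + 1) ^ (s + d) := by rw [Real.rpow_neg zero_le_two]; ring

lemma rpow_evdist_mul_rpow_le {e b : Edge d} {x : Fin d → ℤ} {t u : ℝ} (ht : 0 ≤ t)
    (he : evdist b x / 2 ≤ edist' e b) :
    (evdist e x + 1) ^ t * (edist' e b + 1) ^ (-u) ≤ 3 ^ t * (edist' e b + 1) ^ (t - u) := by
  have hpos : 0 < edist' e b + 1 := by linarith [edist'_nonneg e b]
  have hclose : evdist e x + 1 ≤ 3 * (edist' e b + 1) := by
    linarith [evdist_le_edist'_add e b x]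
  calc (evdist e x + 1) ^ t * (edist' e b + 1) ^ (-u)
      ≤ (3 * (edist' e b + 1)) ^ t * (edist' e b + 1) ^ (-u) := by
        gcongr
        linarith [evdist_nonneg e x]
    _ = 3 ^ t * (edist' e b + 1) ^ (t - u) := by
      rw [Real.mul_rpow zero_le_three hpos.le, mul_assoc, ← Real.rpow_add hpos, sub_eq_add_neg]

end Edge

theorem weighted_edge_sum_estimate_general (d : ℕ) (p β : ℝ)
    (hp : 1 ≤ p) (hβ : 0 < β) (hexp : 2 * p * (β - d) + d < 0) :
    ∃ C : ℝ, ∀ (x : Fin d → ℤ) (b : Edge d),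
      ∑' e : Edge d,
          Set.indicator {e : Edge d | evdist b x / 2 ≤ edist' e b}
            (fun e => (evdist e x + 1) ^ (2 * p * β) * (edist' e b + 1) ^ (-(2 * p * d))) e
        ≤ C * (evdist b x + 1) ^ (2 * p * (β - d) + d) := by
  have ht : 0 ≤ 2 * p * β := by positivity
  obtain ⟨C, hC, htail⟩ := exists_tsum_edist'_tail_le hexp
  refine ⟨3 ^ (2 * p * β) * C, fun x b => ?_⟩
  have hR := evdist_nonneg b x
  refine (tsum_indicator_le_mul_of_ofReal_le (fun e _ => ?_) (by positivity)
    (mul_nonneg hC (Real.rpow_nonneg (by linarith) _)) (fun e he => ?_)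
    (htail b _ hR)).trans_eq (mul_assoc _ _ _).symm
  · exact mul_nonneg (Real.rpow_nonneg (by linarith [evdist_nonneg e x]) _)
      (Real.rpow_nonneg (by linarith [edist'_nonneg e b]) _)
  · rw [← ENNReal.ofReal_mul (by positivity),
      show 2 * p * (β - d) = 2 * p * β - 2 * p * d by ring]
    exact ENNReal.ofReal_le_ofReal (rpow_evdist_mul_rpow_le ht he)

/-- Weighted lattice summation estimate over edges `e` with `|e−b| ≥ |b−x|/2`. -/
theorem weighted_edge_sum_estimate (d : ℕ) (hd : 1 ≤ d) (p β : ℝ)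
    (hp : 1 ≤ p) (hβ : 0 < β) (hexp : 2 * p * (β - d) + d < 0) :
    ∃ C : ℝ, ∀ (x : Fin d → ℤ) (b : Edge d),
      ∑' e : Edge d,
          Set.indicator {e : Edge d | evdist b x / 2 ≤ edist' e b}
            (fun e => (evdist e x + 1) ^ (2 * p * β) * (edist' e b + 1) ^ (-(2 * p * d))) e
        ≤ C * (evdist b x + 1) ^ (2 * p * (β - d) + d) :=
  weighted_edge_sum_estimate_general d p β hp hβ hexp
end
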